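/- Let m > 1 be a positive integer. Then there is no ternary linear code with parameters [3^m, 3^m − 2m − 1, 6]; that is, every linear code over F_3 of length 3^m and dimension 3^m − 2m − 1 has minimum Hamming distance at most 5. -/

import Mathlib

/-!
Let `C` be a ternary code of length `n ≥ 4` with minimum distance at least `6`, and `Q` the
quotient of the ambient space by `C` (the syndromes). Vectors of weight `≤ 2` have distinct
syndromes, none of which is the syndrome of a weight-`3` vector; and the weight-`3` vectors
sharing one syndrome have pairwise disjoint supports, so there are at most `n / 3` of them.
Counting gives `(2n² + 1) + 4(n - 1)(n - 2) ≤ |Q|`, i.e. `|Q| ≥ 3n² + 3(n - 1)(n - 3) > 3n²`.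
For `n = 3^m` and dimension `3^m - 2m - 1`, however, `|Q| = 3^(2m+1) = 3n²`.
-/

open scoped Classical

open Finset

variable {ι α : Type*} [Fintype ι] [DecidableEq α] [Zero α]

def hammingSupport (x : ι → α) : Finset ι := {i | x i ≠ 0}

theorem hammingNorm_eq_card_hammingSupport (x : ι → α) : hammingNorm x = #(hammingSupport x) :=
  rfl

theorem card_filter_hammingSupport_eq [Fintype α] (s : Finset ι) :
    #{x : ι → α | hammingSupport x = s} = (Fintype.card α - 1) ^ #s := by
  have : ({x : ι → α | hammingSupport x = s} : Finset _) =
      Fintype.piFinset fun i => if i ∈ s then univ.erase 0 else {0} := by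
    ext x
    simp only [hammingSupport, mem_filter, mem_univ, true_and, Fintype.mem_piFinset,
      Finset.ext_iff]
    refine forall_congr' fun i => ?_
    split_ifs with hi <;> simp [hi]
  rw [this, Fintype.card_piFinset]
  simp [apply_ite card, prod_ite_mem, card_erase_of_mem]

theorem card_filter_hammingNorm_eq [Fintype α] (w : ℕ) :
    #{x : ι → α | hammingNorm x = w} =
      (Fintype.card ι).choose w * (Fintype.card α - 1) ^ w := by
  rw [card_eq_sum_card_fiberwise (f := hammingSupport) (t := powersetCard w univ)
    fun x hx => by simpa [hammingNorm_eq_card_hammingSupport] using (mem_filter.mp hx).2]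
  have hfiber : ∀ s ∈ powersetCard w (univ : Finset ι),
      #{x ∈ ({x : ι → α | hammingNorm x = w} : Finset _) | hammingSupport x = s} =
        (Fintype.card α - 1) ^ w := by
    intro s hs
    rw [mem_powersetCard] at hs
    rw [filter_filter, ← hs.2, ← card_filter_hammingSupport_eq]
    congr 1
    refine filter_congr fun x _ => ⟨fun h => h.2, fun h => ⟨?_, h⟩⟩
    rw [hammingNorm_eq_card_hammingSupport, h, hs.2]
  rw [sum_congr rfl hfiber, sum_const, card_powersetCard, card_univ, smul_eq_mul]

theorem card_filter_hammingNorm_le [Fintype α] (r : ℕ) :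
    #{x : ι → α | hammingNorm x ≤ r} =
      ∑ w ∈ range (r + 1), (Fintype.card ι).choose w * (Fintype.card α - 1) ^ w := by
  rw [card_eq_sum_card_fiberwise (f := hammingNorm) (t := range (r + 1))
    fun x hx => by simpa [Nat.lt_succ_iff] using hx]
  refine sum_congr rfl fun w hw => ?_
  rw [filter_filter, ← card_filter_hammingNorm_eq]
  congr 1
  refine filter_congr fun x _ => ⟨fun h => h.2, fun h => ⟨?_, h⟩⟩
  rw [mem_range] at hw
  omega

theorem hammingDist_le_card_hammingSupport_union (x y : ι → α) :
    hammingDist x y ≤ #(hammingSupport x ∪ hammingSupport y) := by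
  refine card_le_card fun i => ?_
  simp only [hammingSupport, mem_filter, mem_univ, true_and, mem_union]
  contrapose!
  rintro ⟨hx, hy⟩
  rw [hx, hy]

theorem hammingDist_le_hammingNorm_add (x y : ι → α) :
    hammingDist x y ≤ hammingNorm x + hammingNorm y :=
  (hammingDist_le_card_hammingSupport_union x y).trans (card_union_le _ _)

theorem disjoint_hammingSupport_of_add_le_hammingDist {x y : ι → α}
    (h : hammingNorm x + hammingNorm y ≤ hammingDist x y) :
    Disjoint (hammingSupport x) (hammingSupport y) := by
  rw [← card_union_eq_card_add_card]
  exact le_antisymm (card_union_le _ _) (h.trans (hammingDist_le_card_hammingSupport_union x y))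

theorem mul_card_le_of_hammingNorm_eq {F : Finset (ι → α)} {w : ℕ}
    (hw : ∀ x ∈ F, hammingNorm x = w)
    (hdist : ∀ x ∈ F, ∀ y ∈ F, x ≠ y → 2 * w ≤ hammingDist x y) :
    w * #F ≤ Fintype.card ι := by
  have hdisj : (F : Set (ι → α)).PairwiseDisjoint hammingSupport := by
    intro x hx y hy hxy
    apply disjoint_hammingSupport_of_add_le_hammingDist
    rw [hw x hx, hw y hy, ← two_mul]
    exact hdist x hx y hy hxy
  calc w * #F = #(F.biUnion hammingSupport) := by
        rw [card_biUnion hdisj, mul_comm]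
        exact (sum_const_nat hw).symm
    _ ≤ Fintype.card ι := card_le_univ _

theorem card_mul_card_ball_two_add_card_sphere_three_le [Fintype α] {Q : Type*} [Fintype Q]
    (σ : (ι → α) → Q) (hσ : ∀ x y, σ x = σ y → x ≠ y → 6 ≤ hammingDist x y) :
    Fintype.card ι * #{x : ι → α | hammingNorm x ≤ 2} +
      3 * #{x : ι → α | hammingNorm x = 3} ≤
      Fintype.card ι * Fintype.card Q := by
  set B : Finset (ι → α) := {x | hammingNorm x ≤ 2}
  set S : Finset (ι → α) := {x | hammingNorm x = 3}
  have eq_of_small : ∀ x y, σ x = σ y → hammingNorm x + hammingNorm y < 6 → x = y :=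
    fun x y hxy hsmall => by
      by_contra hne
      exact absurd ((hσ x y hxy hne).trans (hammingDist_le_hammingNorm_add x y)) (by omega)
  have hinj : Set.InjOn σ B := fun x hx y hy hxy => by
    simp only [B, mem_coe, mem_filter_univ] at hx hy
    exact eq_of_small x y hxy (by omega)
  have hdisj : Disjoint (B.image σ) (S.image σ) := by
    refine disjoint_left.mpr fun q hqB hqS => ?_
    obtain ⟨x, hx, rfl⟩ := mem_image.mp hqB
    obtain ⟨y, hy, hxy⟩ := mem_image.mp hqS
    simp only [B, S, mem_filter_univ] at hx hy
    obtain rfl := eq_of_small x y hxy.symm (by omega)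
    omega
  have hfiber : ∀ q ∈ S.image σ, 3 * #{x ∈ S | σ x = q} ≤ Fintype.card ι := by
    intro q _
    refine mul_card_le_of_hammingNorm_eq (fun x hx => ?_) fun x hx y hy hne => ?_
    · simp only [S, mem_filter, mem_univ, true_and] at hx
      exact hx.1
    · simp only [mem_filter] at hx hy
      exact hσ x y (hx.2.trans hy.2.symm) hne
  have hS : 3 * #S ≤ Fintype.card ι * #(S.image σ) := by
    rw [card_eq_sum_card_fiberwise fun x hx => mem_image_of_mem σ hx, mul_sum, mul_comm]
    exact (sum_le_sum hfiber).trans_eq (by rw [sum_const, smul_eq_mul])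
  have himage : #B + #(S.image σ) ≤ Fintype.card Q := by
    rw [← card_image_of_injOn hinj, ← card_union_of_disjoint hdisj]
    exact card_le_univ _
  calc Fintype.card ι * #B + 3 * #S ≤ Fintype.card ι * (#B + #(S.image σ)) := by
        rw [mul_add]; exact Nat.add_le_add_left hS _
    _ ≤ Fintype.card ι * Fintype.card Q := Nat.mul_le_mul_left _ himage

theorem AddSubgroup.card_mul_card_ball_two_add_card_sphere_three_le {G : Type*} [AddGroup G]
    [Fintype G] [DecidableEq G] (C : AddSubgroup (ι → G))
    (hC : ∀ v ∈ C, v ≠ 0 → 6 ≤ hammingNorm v) :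
    Fintype.card ι * #{x : ι → G | hammingNorm x ≤ 2} +
      3 * #{x : ι → G | hammingNorm x = 3} ≤
      Fintype.card ι * Nat.card ((ι → G) ⧸ C) := by
  have : Fintype ((ι → G) ⧸ C) := Fintype.ofFinite _
  rw [Nat.card_eq_fintype_card]
  refine _root_.card_mul_card_ball_two_add_card_sphere_three_le QuotientAddGroup.mk
    fun x y hxy hne => ?_
  rw [hammingDist_eq_hammingNorm]
  exact hC _ (QuotientAddGroup.eq.mp hxy) (neg_add_eq_zero.not.mpr hne)

theorem three_mul_pow_three_lt_of_four_le {n : ℕ} (hn : 4 ≤ n) :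
    3 * n ^ 3 < n * ∑ w ∈ range 3, n.choose w * 2 ^ w + 3 * (n.choose 3 * 2 ^ 3) := by
  simp only [sum_range_succ, sum_range_zero, Nat.choose_zero_right, Nat.choose_one_right]
  obtain ⟨k, rfl⟩ := Nat.exists_eq_add_of_le' hn
  have h2 := Nat.choose_succ_right_eq (k + 4) 1
  have h3 := Nat.choose_succ_right_eq (k + 4) 2
  simp only [Nat.choose_one_right, show k + 4 - 1 = k + 3 by omega,
    show k + 4 - 2 = k + 2 by omega] at h2 h3
  nlinarith

theorem three_mul_sq_lt_card_quotient_of_ternary (C : AddSubgroup (ι → ZMod 3))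
    (hC : ∀ v ∈ C, v ≠ 0 → 6 ≤ hammingNorm v) (hn : 4 ≤ Fintype.card ι) :
    3 * Fintype.card ι ^ 2 < Nat.card ((ι → ZMod 3) ⧸ C) := by
  have hpacking := C.card_mul_card_ball_two_add_card_sphere_three_le hC
  rw [card_filter_hammingNorm_le, card_filter_hammingNorm_eq, ZMod.card,
    show 3 - 1 = 2 from rfl] at hpacking
  refine lt_of_mul_lt_mul_left (a := Fintype.card ι) ?_ (Nat.zero_le _)
  linarith [three_mul_pow_three_lt_of_four_le hn]

theorem Submodule.natCard_quotient_toAddSubgroup {K V : Type*} [Field K] [Finite K]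
    [AddCommGroup V] [Module K V] [FiniteDimensional K V] (C : Submodule K V) :
    Nat.card (V ⧸ C.toAddSubgroup) = Nat.card K ^ (Module.finrank K V - Module.finrank K C) := by
  show Nat.card (V ⧸ C) = _
  rw [Module.natCard_eq_pow_finrank (K := K), Submodule.finrank_quotient]

/-- For `m > 1` there is no ternary linear code with parameters
`[3^m, 3^m − 2m − 1, 6]`: every linear code over `F_3` of length `3^m` and dimension
`3^m − 2m − 1` contains a nonzero codeword of Hamming weight at most `5`. -/
theorem stmt_19 (m : ℕ) (hm : 1 < m)
    (C : Submodule (ZMod 3) (Fin (3 ^ m) → ZMod 3))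
    (hdim : Module.finrank (ZMod 3) C = 3 ^ m - 2 * m - 1) :
    ∃ v ∈ C, v ≠ 0 ∧ hammingNorm v ≤ 5 := by
  by_contra! hC
  have hredundancy : 2 * m + 1 ≤ 3 ^ m := by
    have := one_add_mul_le_pow_of_sq_nonneg (a := (2 : ℕ)) (Nat.zero_le _) (Nat.zero_le _)
      (Nat.zero_le _) m
    rw [Nat.cast_id, mul_comm, add_comm] at this
    exact this
  have hlength : 4 ≤ Fintype.card (Fin (3 ^ m)) := by
    rw [Fintype.card_fin]
    calc 4 ≤ 3 ^ 2 := by norm_num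
      _ ≤ 3 ^ m := Nat.pow_le_pow_right (by norm_num) hm
  have hindex : Nat.card ((Fin (3 ^ m) → ZMod 3) ⧸ C.toAddSubgroup) = 3 * (3 ^ m) ^ 2 := by
    rw [C.natCard_quotient_toAddSubgroup, Nat.card_zmod, Module.finrank_fin_fun, hdim,
      show 3 ^ m - (3 ^ m - 2 * m - 1) = 2 * m + 1 by omega, pow_succ, pow_mul', mul_comm]
  have := three_mul_sq_lt_card_quotient_of_ternary C.toAddSubgroup hC hlength
  rw [hindex, Fintype.card_fin] at this
  exact lt_irrefl _ this
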